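/- arXiv:1606.02174 — 11 statements merged into one kernel-verified Lean document; each statement's English description precedes it below -/
import Mathlib

section
/- Let (X, 𝔐, μ) be a probability space and {S(t)}_{t≥0} a measurable measure-preserving semigroup on it. Then for every E ∈ 𝔐, for μ-almost every x ∈ E there exists a sequence (t_n)_{n∈ℕ} of nonnegative real numbers with t_n → ∞ such that S(t_n)x ∈ E for all n ∈ ℕ. -/
open MeasureTheory Filter Topology

/-- Continuous-time Poincaré Recurrence Theorem: for a measurable
measure-preserving semigroup `{S t}_{t ≥ 0}` on a probability space and a
measurable set `E`, almost every point of `E` returns to `E` along a sequence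
of times tending to infinity. -/
theorem poincare_recurrence_semigroup
    {X : Type*} [MeasurableSpace X] (μ : Measure X) [IsProbabilityMeasure μ]
    (S : ℝ → X → X)
    (hS0 : S 0 = id)
    (hSadd : ∀ t s : ℝ, 0 ≤ t → 0 ≤ s → S (t + s) = S t ∘ S s)
    (hSmeas : ∀ t : ℝ, 0 ≤ t → ∀ E : Set X, MeasurableSet E → MeasurableSet (S t ⁻¹' E))
    (hSinv : ∀ t : ℝ, 0 ≤ t → ∀ E : Set X, MeasurableSet E → μ (S t ⁻¹' E) = μ E)
    (E : Set X) (hE : MeasurableSet E) :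
    ∀ᵐ x ∂μ, x ∈ E → ∃ t : ℕ → ℝ, (∀ n, 0 ≤ t n) ∧
      Tendsto t atTop atTop ∧ ∀ n, S (t n) x ∈ E := by
  set T : X → X := S 1 with hT
  have hTmeas : Measurable T := fun s hs => hSmeas 1 zero_le_one s hs
  have hTmp : MeasurePreserving T μ μ := by
    refine ⟨hTmeas, Measure.ext fun s hs => ?_⟩
    rw [Measure.map_apply hTmeas hs]
    exact hSinv 1 zero_le_one s hs
  have hiter : ∀ (k : ℕ), T^[k] = S (k : ℝ) := by
    intro k
    induction k with
    | zero => simp [hS0]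
    | succ n ih =>
      push_cast
      rw [hSadd (n : ℝ) 1 (by positivity) zero_le_one,
        Function.iterate_succ, ih]
  have hcons := hTmp.conservative.ae_mem_imp_frequently_image_mem
    hE.nullMeasurableSet
  filter_upwards [hcons] with x hx hxE
  obtain ⟨φ, hφmono, hφ⟩ := Filter.extraction_of_frequently_atTop (hx hxE)
  refine ⟨fun n => (φ n : ℝ), fun n => by positivity, ?_, fun n => ?_⟩
  · exact tendsto_natCast_atTop_atTop.comp hφmono.tendsto_atTop
  · rw [← hiter]; exact hφ n
end

section
/- Let K be a compact metrizable topological space, σ a continuous semiflow on K, u ∈ K, and LIM a generalized limit. For every continuous φ : K → ℝ and every t ≥ 0, the function T ↦ (1/T)∫_t^{t+T} φ(σ(s,u)) ds (extended by the value φ(σ(t,u)) at T = 0) is bounded and continuous on [0,∞). There exists a Borel probability measure ρ on K such that ∫_K φ dρ = LIM(T ↦ (1/T)∫_t^{t+T} φ(σ(s,u)) ds) for every continuous φ : K → ℝ and every t ≥ 0; in particular the right-hand side does not depend on t. Moreover, ρ is σ-invariant. -/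
open MeasureTheory Filter Topology
open scoped NNReal BoundedContinuousFunction CompactlySupported

/-!
By Riesz–Markov–Kakutani, `ρ` is the measure representing the positive normalized functional
`φ ↦ LIM (T ↦ (1/T) ∫₀^T φ(σ(s,u)) ds)` on `C(K)`. Moving the start of the averaging window from
`0` to `t` changes the average by `O(t/T)`, which `LIM` does not see; this gives the independence
of `t`. Averaging `φ ∘ σ_τ` from `0` is averaging `φ` from `τ`, so `ρ` and its image under `σ_τ`
integrate every bounded continuous function alike, and on a metrizable space this determines a
finite Borel measure.
-/

namespace BoundedContinuousFunction

/-- The mean of `f` over `[t, t + T]`, rescaled to `[0, 1]` so that the value at `T = 0` is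
`f t` and continuity in `T` is that of a parametric integral. -/
noncomputable def cesaroMean (t : ℝ) : (ℝ →ᵇ ℝ) →ₗ[ℝ] (ℝ≥0 →ᵇ ℝ) where
  toFun f := ofNormedAddCommGroup (fun T : ℝ≥0 => ∫ r in (0 : ℝ)..1, f (t + T * r))
    (intervalIntegral.continuous_parametric_intervalIntegral_of_continuous'
      (by fun_prop) 0 1) ‖f‖
    (fun T => by
      simpa using intervalIntegral.norm_integral_le_of_norm_le_const
        (a := 0) (b := 1) fun r _ => f.norm_coe_le_norm (t + T * r))
  map_add' f g := by
    ext T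
    exact intervalIntegral.integral_add (Continuous.intervalIntegrable (by fun_prop) _ _)
      (Continuous.intervalIntegrable (by fun_prop) _ _)
  map_smul' c f := by
    ext T
    exact intervalIntegral.integral_smul c _

variable (t : ℝ) (f : ℝ →ᵇ ℝ)

theorem cesaroMean_apply (T : ℝ≥0) :
    cesaroMean t f T = ∫ r in (0 : ℝ)..1, f (t + T * r) := rfl

theorem cesaroMean_apply_zero : cesaroMean t f 0 = f t := by
  simp [cesaroMean_apply]

theorem cesaroMean_apply_of_ne_zero {T : ℝ≥0} (hT : T ≠ 0) :
    cesaroMean t f T = (T : ℝ)⁻¹ * ∫ s in t..t + T, f s := by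
  rw [cesaroMean_apply, intervalIntegral.integral_comp_add_mul _ (NNReal.coe_ne_zero.2 hT)]
  simp

theorem cesaroMean_nonneg {f : ℝ →ᵇ ℝ} (hf : 0 ≤ f) : 0 ≤ cesaroMean t f := fun _ =>
  intervalIntegral.integral_nonneg zero_le_one fun _ _ => hf _

theorem cesaroMean_one : cesaroMean t 1 = 1 := by
  ext T
  simp [cesaroMean_apply]

theorem tendsto_cesaroMean_sub :
    Tendsto (fun T => cesaroMean t f T - cesaroMean 0 f T) atTop (𝓝 0) := by
  have hf_int (a b : ℝ) : IntervalIntegrable f volume a b := f.continuous.intervalIntegrable a b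
  have hbound (a b : ℝ) : ‖∫ s in a..b, f s‖ ≤ ‖f‖ * |b - a| :=
    intervalIntegral.norm_integral_le_of_norm_le_const fun s _ => f.norm_coe_le_norm s
  refine squeeze_zero_norm' (a := fun T : ℝ≥0 => (T : ℝ)⁻¹ * (2 * ‖f‖ * |t|)) ?_ ?_
  · filter_upwards [eventually_ne_atTop 0] with T hT
    rw [cesaroMean_apply_of_ne_zero _ _ hT, cesaroMean_apply_of_ne_zero _ _ hT, zero_add,
      ← mul_sub, intervalIntegral.integral_interval_sub_interval_comm (hf_int _ _) (hf_int _ _)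
        (hf_int _ _), norm_mul, norm_inv, NNReal.norm_eq]
    gcongr
    refine (norm_sub_le _ _).trans ?_
    have h₁ := hbound t 0
    have h₂ := hbound (t + T) T
    rw [zero_sub, abs_neg] at h₁
    rw [show (T : ℝ) - (t + T) = -t by ring, abs_neg] at h₂
    linarith
  · simpa using (tendsto_inv_atTop_zero.comp (NNReal.tendsto_coe_atTop.2 tendsto_id)).mul_const
      (2 * ‖f‖ * |t|)

end BoundedContinuousFunction

namespace LinearMap

theorem map_eq_map_of_tendsto_sub {LIM : (ℝ≥0 →ᵇ ℝ) →ₗ[ℝ] ℝ}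
    (hLIM : ∀ (g : ℝ≥0 →ᵇ ℝ) (a : ℝ), Tendsto (fun T => g T) atTop (𝓝 a) → LIM g = a)
    {g g' : ℝ≥0 →ᵇ ℝ} (h : Tendsto (fun T => g T - g' T) atTop (𝓝 0)) : LIM g = LIM g' :=
  sub_eq_zero.1 <| map_sub LIM g g' ▸ hLIM (g - g') 0 h

end LinearMap

open BoundedContinuousFunction

section Semiflow

variable {K : Type*} [TopologicalSpace K] {σ : ℝ≥0 → K → K}
  (hσ : Continuous fun p : ℝ≥0 × K => σ p.1 p.2)

def orbitCurve (u : K) : C(ℝ, K) :=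
  ⟨fun s => σ s.toNNReal u, hσ.comp (continuous_real_toNNReal.prodMk continuous_const)⟩

def flowMap (τ : ℝ≥0) : C(K, K) := ⟨σ τ, hσ.comp (Continuous.prodMk_right τ)⟩

theorem cesaroMean_comp_flowMap (hσadd : ∀ (t s : ℝ≥0) (v : K), σ (t + s) v = σ t (σ s v))
    (u : K) (f : K →ᵇ ℝ) (τ : ℝ≥0) :
    cesaroMean 0 ((f.compContinuous (flowMap hσ τ)).compContinuous (orbitCurve hσ u)) =
      cesaroMean τ (f.compContinuous (orbitCurve hσ u)) := by
  ext T
  refine intervalIntegral.integral_congr fun r hr => ?_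
  have hr : 0 ≤ (T : ℝ) * r := mul_nonneg T.coe_nonneg (Set.uIcc_of_le (zero_le_one' ℝ) ▸ hr).1
  simp [orbitCurve, flowMap, Real.toNNReal_add τ.coe_nonneg hr, hσadd]

variable (u : K) (LIM : (ℝ≥0 →ᵇ ℝ) →ₗ[ℝ] ℝ)
  (hLIMpos : ∀ g : ℝ≥0 →ᵇ ℝ, (∀ s, 0 ≤ g s) → 0 ≤ LIM g)

noncomputable def timeAverageFunctional : C_c(K, ℝ) →ₚ[ℝ] ℝ :=
  .mk₀
    { toFun f :=
        LIM (cesaroMean 0 (f.toBoundedContinuousFunction.compContinuous (orbitCurve hσ u)))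
      map_add' f g := by rw [← map_add, ← map_add]; rfl
      map_smul' c f := by rw [← map_smul, ← map_smul]; rfl }
    fun f hf => hLIMpos _ (cesaroMean_nonneg 0 fun s => hf _)

variable [T2Space K] [LocallyCompactSpace K] [MeasurableSpace K] [BorelSpace K]

noncomputable def timeAverageMeasure : Measure K :=
  RealRMK.rieszMeasure (timeAverageFunctional hσ u LIM hLIMpos)

variable [CompactSpace K]
  (hLIMlim : ∀ (g : ℝ≥0 →ᵇ ℝ) (a : ℝ), Tendsto (fun T => g T) atTop (𝓝 a) → LIM g = a)
include hLIMlim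

theorem integral_timeAverageMeasure (f : K →ᵇ ℝ) (t : ℝ) :
    ∫ x, f x ∂timeAverageMeasure hσ u LIM hLIMpos =
      LIM (cesaroMean t (f.compContinuous (orbitCurve hσ u))) :=
  (RealRMK.integral_rieszMeasure _
    (CompactlySupportedContinuousMap.continuousMapEquiv f.toContinuousMap)).trans
    (LinearMap.map_eq_map_of_tendsto_sub hLIMlim (tendsto_cesaroMean_sub _ _)).symm

theorem isProbabilityMeasure_timeAverageMeasure :
    IsProbabilityMeasure (timeAverageMeasure hσ u LIM hLIMpos) := by
  have hLIM_one : LIM 1 = 1 := hLIMlim 1 1 tendsto_const_nhds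
  have h := integral_timeAverageMeasure hσ u LIM hLIMpos hLIMlim 1 0
  rw [one_compContinuous, cesaroMean_one, hLIM_one] at h
  simp only [BoundedContinuousFunction.coe_one, Pi.one_apply, integral_const, smul_eq_mul,
    mul_one, measureReal_def, ENNReal.toReal_eq_one_iff] at h
  exact ⟨h⟩

theorem map_timeAverageMeasure [TopologicalSpace.MetrizableSpace K]
    (hσadd : ∀ (t s : ℝ≥0) (v : K), σ (t + s) v = σ t (σ s v)) (τ : ℝ≥0) :
    (timeAverageMeasure hσ u LIM hLIMpos).map (σ τ) = timeAverageMeasure hσ u LIM hLIMpos := by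
  have := isProbabilityMeasure_timeAverageMeasure hσ u LIM hLIMpos hLIMlim
  have hmeas : Measurable (σ τ) := (flowMap hσ τ).continuous.measurable
  refine ext_of_forall_integral_eq_of_IsFiniteMeasure fun f => ?_
  calc ∫ x, f x ∂(timeAverageMeasure hσ u LIM hLIMpos).map (σ τ)
      = ∫ x, f.compContinuous (flowMap hσ τ) x ∂timeAverageMeasure hσ u LIM hLIMpos :=
        integral_map hmeas.aemeasurable f.continuous.aestronglyMeasurable
    _ = LIM (cesaroMean τ (f.compContinuous (orbitCurve hσ u))) := by
        rw [integral_timeAverageMeasure hσ u LIM hLIMpos hLIMlim _ 0,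
          cesaroMean_comp_flowMap hσ hσadd]
    _ = ∫ x, f x ∂timeAverageMeasure hσ u LIM hLIMpos :=
        (integral_timeAverageMeasure hσ u LIM hLIMpos hLIMlim f τ).symm

end Semiflow

theorem exists_timeAverage_invariant_measure_general
    {K : Type*} [TopologicalSpace K] [CompactSpace K]
    [TopologicalSpace.MetrizableSpace K] [MeasurableSpace K] [BorelSpace K]
    (σ : ℝ≥0 → K → K)
    (hσadd : ∀ (t s : ℝ≥0) (v : K), σ (t + s) v = σ t (σ s v))
    (hσcont : Continuous fun p : ℝ≥0 × K => σ p.1 p.2)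
    (u : K)
    (LIM : BoundedContinuousFunction ℝ≥0 ℝ →ₗ[ℝ] ℝ)
    (hLIMpos : ∀ g : BoundedContinuousFunction ℝ≥0 ℝ, (∀ s, 0 ≤ g s) → 0 ≤ LIM g)
    (hLIMlim : ∀ (g : BoundedContinuousFunction ℝ≥0 ℝ) (a : ℝ),
      Tendsto (fun T => g T) atTop (𝓝 a) → LIM g = a) :
    (∀ (φ : C(K, ℝ)) (t : ℝ≥0), ∃ g : BoundedContinuousFunction ℝ≥0 ℝ,
      ∀ T : ℝ≥0, g T = if T = 0 then φ (σ t u)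
        else (T : ℝ)⁻¹ * ∫ s in (t : ℝ)..((t : ℝ) + (T : ℝ)), φ (σ s.toNNReal u)) ∧
    ∃ ρ : Measure K, IsProbabilityMeasure ρ ∧
      (∀ (τ : ℝ≥0) (E : Set K), MeasurableSet E → ρ (σ τ ⁻¹' E) = ρ E) ∧
      (∀ (φ : C(K, ℝ)) (t : ℝ≥0) (g : BoundedContinuousFunction ℝ≥0 ℝ),
        (∀ T : ℝ≥0, g T = if T = 0 then φ (σ t u)
          else (T : ℝ)⁻¹ * ∫ s in (t : ℝ)..((t : ℝ) + (T : ℝ)), φ (σ s.toNNReal u)) →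
        ∫ v, φ v ∂ρ = LIM g) := by
  let average (φ : C(K, ℝ)) (t : ℝ≥0) :=
    cesaroMean t ((mkOfCompact φ).compContinuous (orbitCurve hσcont u))
  have average_apply (φ : C(K, ℝ)) (t T : ℝ≥0) : average φ t T = if T = 0 then φ (σ t u)
      else (T : ℝ)⁻¹ * ∫ s in (t : ℝ)..((t : ℝ) + (T : ℝ)), φ (σ s.toNNReal u) := by
    split_ifs with hT
    · simp [average, hT, cesaroMean_apply_zero, orbitCurve]
    · exact cesaroMean_apply_of_ne_zero _ _ hT
  refine ⟨fun φ t => ⟨average φ t, average_apply φ t⟩, timeAverageMeasure hσcont u LIM hLIMpos,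
    isProbabilityMeasure_timeAverageMeasure hσcont u LIM hLIMpos hLIMlim, fun τ E hE => ?_,
    fun φ t g hg => ?_⟩
  · rw [← Measure.map_apply (f := σ τ) (flowMap hσcont τ).continuous.measurable hE,
      map_timeAverageMeasure hσcont u LIM hLIMpos hLIMlim hσadd]
  · obtain rfl : g = average φ t := ext fun T => (hg T).trans (average_apply φ t T).symm
    exact integral_timeAverageMeasure hσcont u LIM hLIMpos hLIMlim (mkOfCompact φ) t

/-- For a continuous semiflow `σ` on a compact metrizable space `K`, a point
`u ∈ K` and a generalized limit `LIM`: the time averages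
`T ↦ (1/T) ∫_t^{t+T} φ(σ(s,u)) ds` (extended by `φ(σ(t,u))` at `T = 0`) are
bounded continuous functions of `T`, and there exists a Borel probability
measure `ρ` on `K`, invariant under the semiflow, with
`∫ φ dρ = LIM` of those time averages, for every continuous `φ` and every
`t ≥ 0` (in particular the value is independent of `t`). -/
theorem exists_timeAverage_invariant_measure
    {K : Type*} [TopologicalSpace K] [CompactSpace K]
    [TopologicalSpace.MetrizableSpace K] [MeasurableSpace K] [BorelSpace K]
    (σ : ℝ≥0 → K → K)
    (hσ0 : ∀ v, σ 0 v = v)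
    (hσadd : ∀ (t s : ℝ≥0) (v : K), σ (t + s) v = σ t (σ s v))
    (hσcont : Continuous fun p : ℝ≥0 × K => σ p.1 p.2)
    (u : K)
    (LIM : BoundedContinuousFunction ℝ≥0 ℝ →ₗ[ℝ] ℝ)
    (hLIMpos : ∀ g : BoundedContinuousFunction ℝ≥0 ℝ, (∀ s, 0 ≤ g s) → 0 ≤ LIM g)
    (hLIMlim : ∀ (g : BoundedContinuousFunction ℝ≥0 ℝ) (a : ℝ),
      Tendsto (fun T => g T) atTop (𝓝 a) → LIM g = a) :
    (∀ (φ : C(K, ℝ)) (t : ℝ≥0), ∃ g : BoundedContinuousFunction ℝ≥0 ℝ,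
      ∀ T : ℝ≥0, g T = if T = 0 then φ (σ t u)
        else (T : ℝ)⁻¹ * ∫ s in (t : ℝ)..((t : ℝ) + (T : ℝ)), φ (σ s.toNNReal u)) ∧
    ∃ ρ : Measure K, IsProbabilityMeasure ρ ∧
      (∀ (τ : ℝ≥0) (E : Set K), MeasurableSet E → ρ (σ τ ⁻¹' E) = ρ E) ∧
      (∀ (φ : C(K, ℝ)) (t : ℝ≥0) (g : BoundedContinuousFunction ℝ≥0 ℝ),
        (∀ T : ℝ≥0, g T = if T = 0 then φ (σ t u)
          else (T : ℝ)⁻¹ * ∫ s in (t : ℝ)..((t : ℝ) + (T : ℝ)), φ (σ s.toNNReal u)) →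
        ∫ v, φ v ∂ρ = LIM g) :=
  exists_timeAverage_invariant_measure_general σ hσadd hσcont u LIM hLIMpos hLIMlim
end

section
/- Let (X, 𝔐, μ) be a probability space and σ : [0,∞) × X → X a jointly measurable map such that for each t ≥ 0 the map σ_t = σ(t,·) satisfies σ_t⁻¹E ∈ 𝔐 and μ(σ_t⁻¹E) = μ(E) for every E ∈ 𝔐. Let F : X → [0,∞] be measurable and let C ≥ 0 and a ≥ 0 be constants such that for μ-almost every x ∈ X and every T > 0 one has ∫_0^T F(σ(t,x)) dt ≤ C·T + a (Lebesgue integral in [0,∞]). Then ∫_X F dμ ≤ C. -/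
/-!
Since each `σ t` preserves `μ`, `∫ F ∘ σ t dμ = ∫ F dμ` for every `t`, so by Tonelli
`T · ∫ F dμ = ∫ (∫_0^T F(σ(t,x)) dt) dμ(x) ≤ C T + a`. Dividing by `T` and letting `T → ∞`
gives `∫ F dμ ≤ C`.
-/

open MeasureTheory Filter Topology
open scoped NNReal ENNReal

theorem ENNReal.le_of_forall_natCast_mul_le_mul_add {x y a : ℝ≥0∞} (ha : a ≠ ∞)
    (h : ∀ n : ℕ, 0 < n → n * x ≤ n * y + a) : x ≤ y := by
  have hlim : Tendsto (fun n : ℕ => y + a / n) atTop (𝓝 y) := by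
    simpa using
      tendsto_const_nhds.add (ENNReal.Tendsto.const_div tendsto_nat_nhds_top (Or.inr ha))
  refine ge_of_tendsto hlim (eventually_atTop.2 ⟨1, fun n hn => ?_⟩)
  have hn0 : (n : ℝ≥0∞) ≠ 0 := by exact_mod_cast (Nat.one_le_iff_ne_zero.1 hn)
  rw [← ENNReal.mul_le_mul_iff_right hn0 (ENNReal.natCast_ne_top n), mul_add,
    ENNReal.mul_div_cancel hn0 (ENNReal.natCast_ne_top n)]
  exact h n hn

theorem MeasureTheory.MeasurePreserving.of_measure_preimage_eq {X Y : Type*} [MeasurableSpace X]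
    [MeasurableSpace Y] {μ : Measure X} {ν : Measure Y} {f : X → Y} (hf : Measurable f)
    (h : ∀ s, MeasurableSet s → μ (f ⁻¹' s) = ν s) : MeasurePreserving f μ ν :=
  ⟨hf, Measure.ext fun s hs => by rw [Measure.map_apply hf hs, h s hs]⟩

theorem MeasureTheory.lintegral_lintegral_comp_eq_measure_univ_mul {T X Y : Type*}
    [MeasurableSpace T] [MeasurableSpace X] [MeasurableSpace Y] (τ : Measure T) [SFinite τ]
    (μ : Measure X) [SFinite μ] {ν : Measure Y} (φ : T → X → Y)
    (hφ : Measurable (Function.uncurry φ)) (hmp : ∀ t, MeasurePreserving (φ t) μ ν)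
    {F : Y → ℝ≥0∞} (hF : Measurable F) :
    ∫⁻ x, ∫⁻ t, F (φ t x) ∂τ ∂μ = τ Set.univ * ∫⁻ y, F y ∂ν := by
  calc ∫⁻ x, ∫⁻ t, F (φ t x) ∂τ ∂μ = ∫⁻ t, ∫⁻ x, F (φ t x) ∂μ ∂τ :=
        lintegral_lintegral_swap (hF.comp (hφ.comp measurable_swap)).aemeasurable
    _ = ∫⁻ _, ∫⁻ y, F y ∂ν ∂τ := lintegral_congr fun t => (hmp t).lintegral_comp hF
    _ = τ Set.univ * ∫⁻ y, F y ∂ν := by rw [lintegral_const, mul_comm]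

theorem lintegral_le_of_timeAverage_bound_general
    {X : Type*} [MeasurableSpace X] (μ : Measure X) [IsProbabilityMeasure μ]
    (σ : ℝ≥0 → X → X)
    (hjoint : Measurable fun p : ℝ≥0 × X => σ p.1 p.2)
    (hinv : ∀ (t : ℝ≥0) (E : Set X), MeasurableSet E → μ (σ t ⁻¹' E) = μ E)
    (F : X → ℝ≥0∞) (hF : Measurable F)
    (C a : ℝ≥0)
    (hbound : ∀ᵐ x ∂μ, ∀ T : ℝ, 0 < T →
      ∫⁻ t in Set.Ioc (0 : ℝ) T, F (σ t.toNNReal x) ≤ C * ENNReal.ofReal T + a) :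
    ∫⁻ x, F x ∂μ ≤ C := by
  have hmp (t : ℝ) : MeasurePreserving (σ t.toNNReal) μ μ :=
    .of_measure_preimage_eq (hjoint.comp measurable_prodMk_left) (hinv t.toNNReal)
  have hφ : Measurable (Function.uncurry fun (t : ℝ) (x : X) => σ t.toNNReal x) :=
    hjoint.comp ((measurable_real_toNNReal.comp measurable_fst).prodMk measurable_snd)
  refine ENNReal.le_of_forall_natCast_mul_le_mul_add (ENNReal.coe_ne_top (r := a)) fun n hn => ?_
  calc (n : ℝ≥0∞) * ∫⁻ x, F x ∂μ
      = ∫⁻ x, (∫⁻ t in Set.Ioc (0 : ℝ) n, F (σ t.toNNReal x)) ∂μ := by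
        rw [lintegral_lintegral_comp_eq_measure_univ_mul _ μ _ hφ hmp hF,
          Measure.restrict_apply_univ, Real.volume_Ioc, sub_zero, ENNReal.ofReal_natCast]
    _ ≤ ∫⁻ _, (C * (n : ℝ≥0∞) + a : ℝ≥0∞) ∂μ := by
        refine lintegral_mono_ae (hbound.mono fun x hx => ?_)
        simpa using hx n (Nat.cast_pos.2 hn)
    _ = n * C + a := by rw [lintegral_const, measure_univ, mul_one, mul_comm]

/-- If `σ` is a jointly measurable family of `μ`-preserving maps on a
probability space and `F : X → [0,∞]` is measurable with
`∫_0^T F(σ(t,x)) dt ≤ C·T + a` for a.e. `x` and all `T > 0`, then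
`∫ F dμ ≤ C`. -/
theorem lintegral_le_of_timeAverage_bound
    {X : Type*} [MeasurableSpace X] (μ : Measure X) [IsProbabilityMeasure μ]
    (σ : ℝ≥0 → X → X)
    (hjoint : Measurable fun p : ℝ≥0 × X => σ p.1 p.2)
    (hpre : ∀ (t : ℝ≥0) (E : Set X), MeasurableSet E → MeasurableSet (σ t ⁻¹' E))
    (hinv : ∀ (t : ℝ≥0) (E : Set X), MeasurableSet E → μ (σ t ⁻¹' E) = μ E)
    (F : X → ℝ≥0∞) (hF : Measurable F)
    (C a : ℝ≥0)
    (hbound : ∀ᵐ x ∂μ, ∀ T : ℝ, 0 < T →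
      ∫⁻ t in Set.Ioc (0 : ℝ) T, F (σ t.toNNReal x) ≤ C * ENNReal.ofReal T + a) :
    ∫⁻ x, F x ∂μ ≤ C :=
  lintegral_le_of_timeAverage_bound_general μ σ hjoint hinv F hF C a hbound
end

section
/- Let X be a Hausdorff topological space, μ an inner regular Borel probability measure on X, and {Σ_t}_{t≥0} a monotone sub-semigroup family of set maps on X with respect to which μ is accretive. Then for every t ≥ 0 and every μ-measurable set E such that Σ_t(E) is μ-measurable, one has μ̄(Σ_t(E)) ≥ μ̄(E). -/
open MeasureTheory Filter Topology
open scoped NNReal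

/-- Extended accretion: if `μ` is an inner regular Borel probability measure on
a Hausdorff space, accretive with respect to a monotone sub-semigroup family of
set maps `{Sg t}_{t ≥ 0}`, then the accretion inequality `μ(Sg t E) ≥ μ(E)`
extends from Borel sets to all `μ`-measurable sets `E` (with `Sg t E`
`μ`-measurable); here `μ` applied to null measurable sets is the completion. -/
theorem accretive_extension_to_null_measurable
    {X : Type*} [TopologicalSpace X] [T2Space X] [MeasurableSpace X] [BorelSpace X]
    (μ : Measure X) [IsProbabilityMeasure μ] [μ.InnerRegular]
    (Sg : ℝ≥0 → Set X → Set X)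
    (hmono : ∀ (t : ℝ≥0) (A B : Set X), A ⊆ B → Sg t A ⊆ Sg t B)
    (hsemi : ∀ (t s : ℝ≥0) (A : Set X), Sg t (Sg s A) ⊆ Sg (t + s) A)
    (haccr : ∀ (t : ℝ≥0) (B : Set X), MeasurableSet B →
      NullMeasurableSet (Sg t B) μ ∧ μ B ≤ μ (Sg t B))
    (t : ℝ≥0) (E : Set X)
    (hE : NullMeasurableSet E μ)
    (hSgE : NullMeasurableSet (Sg t E) μ) :
    μ E ≤ μ (Sg t E) := by
  obtain ⟨B, hBsub, hBmeas, hBeq⟩ := hE.exists_measurable_subset_ae_eq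
  calc μ E = μ B := (measure_congr hBeq).symm
    _ ≤ μ (Sg t B) := (haccr t B hBmeas).2
    _ ≤ μ (Sg t E) := measure_mono (hmono t B E hBsub)
end

section
/- Let X be a Hausdorff topological space, μ an inner regular Borel probability measure on X, and {Σ_t}_{t≥0} a monotone sub-semigroup family of set maps on X with respect to which μ is accretive. Let E ⊆ X be a Borel set and let t ≥ s ≥ 0 be such that Σ_{t−s}(Σ_s(E)) is μ-measurable. Then μ̄(Σ_t(E)) ≥ μ̄(Σ_s(E)). -/
open MeasureTheory Filter Topology
open scoped NNReal

/-- Strengthened accretion: for an inner regular Borel probability measure `μ`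
on a Hausdorff space, accretive with respect to a monotone sub-semigroup family
of set maps `{Sg t}_{t ≥ 0}`, if `E` is Borel, `s ≤ t`, and `Sg (t-s) (Sg s E)`
is `μ`-measurable, then `μ(Sg t E) ≥ μ(Sg s E)`. -/
theorem accretive_strengthened
    {X : Type*} [TopologicalSpace X] [T2Space X] [MeasurableSpace X] [BorelSpace X]
    (μ : Measure X) [IsProbabilityMeasure μ] [μ.InnerRegular]
    (Sg : ℝ≥0 → Set X → Set X)
    (hmono : ∀ (t : ℝ≥0) (A B : Set X), A ⊆ B → Sg t A ⊆ Sg t B)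
    (hsemi : ∀ (t s : ℝ≥0) (A : Set X), Sg t (Sg s A) ⊆ Sg (t + s) A)
    (haccr : ∀ (t : ℝ≥0) (B : Set X), MeasurableSet B →
      NullMeasurableSet (Sg t B) μ ∧ μ B ≤ μ (Sg t B))
    (E : Set X) (hE : MeasurableSet E)
    (s t : ℝ≥0) (hst : s ≤ t)
    (hmeas : NullMeasurableSet (Sg (t - s) (Sg s E)) μ) :
    μ (Sg s E) ≤ μ (Sg t E) := by
  obtain ⟨B, hBsub, hBmeas, hBae⟩ :=
    (haccr s E hE).1.exists_measurable_subset_ae_eq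
  calc μ (Sg s E) = μ B := (measure_congr hBae).symm
    _ ≤ μ (Sg (t - s) B) := (haccr (t - s) B hBmeas).2
    _ ≤ μ (Sg (t - s) (Sg s E)) := measure_mono (hmono _ _ _ hBsub)
    _ ≤ μ (Sg ((t - s) + s) E) := measure_mono (hsemi _ _ _)
    _ = μ (Sg t E) := by rw [tsub_add_cancel_of_le hst]
end

section
/- Let X be a Hausdorff topological space, μ an inner regular Borel probability measure on X, and {Σ_t}_{t≥0} a monotone sub-semigroup family of set maps on X which commutes with arbitrary unions. For E ⊆ X let γ(E) = ⋃_{s≥0} Σ_s(E) be its orbit. Then Σ_t(γ(E)) ⊆ γ(E) for every t ≥ 0. If moreover μ is accretive with respect to {Σ_t}_{t≥0} and, for a given Borel set E and t ≥ 0, both γ(E) and Σ_t(γ(E)) are μ-measurable, then μ̄(Σ_t(γ(E))) = μ̄(γ(E)). -/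
open MeasureTheory Filter Topology
open scoped NNReal

/-- Orbits and accretive measures: for a monotone sub-semigroup family of set
maps `{Sg t}_{t ≥ 0}` on a Hausdorff space which commutes with arbitrary
unions, the orbit `γ(E) = ⋃_{s ≥ 0} Sg s E` satisfies `Sg t (γ E) ⊆ γ E` for
every `t ≥ 0`; and if the inner regular Borel probability measure `μ` is
accretive with respect to the family and both `γ E` and `Sg t (γ E)` are
`μ`-measurable (for a Borel set `E`), then `μ(Sg t (γ E)) = μ(γ E)`. -/
theorem orbit_invariance_for_accretive
    {X : Type*} [TopologicalSpace X] [T2Space X] [MeasurableSpace X] [BorelSpace X]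
    (μ : Measure X) [IsProbabilityMeasure μ] [μ.InnerRegular]
    (Sg : ℝ≥0 → Set X → Set X)
    (hmono : ∀ (t : ℝ≥0) (A B : Set X), A ⊆ B → Sg t A ⊆ Sg t B)
    (hsemi : ∀ (t s : ℝ≥0) (A : Set X), Sg t (Sg s A) ⊆ Sg (t + s) A)
    (hunion : ∀ (t : ℝ≥0) (A : Set X), Sg t A = ⋃ x ∈ A, Sg t {x}) :
    (∀ (t : ℝ≥0) (E : Set X), Sg t (⋃ s : ℝ≥0, Sg s E) ⊆ ⋃ s : ℝ≥0, Sg s E) ∧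
    ((∀ (t : ℝ≥0) (B : Set X), MeasurableSet B →
        NullMeasurableSet (Sg t B) μ ∧ μ B ≤ μ (Sg t B)) →
      ∀ (t : ℝ≥0) (E : Set X), MeasurableSet E →
        NullMeasurableSet (⋃ s : ℝ≥0, Sg s E) μ →
        NullMeasurableSet (Sg t (⋃ s : ℝ≥0, Sg s E)) μ →
        μ (Sg t (⋃ s : ℝ≥0, Sg s E)) = μ (⋃ s : ℝ≥0, Sg s E)) := by

  have hsub : ∀ (t : ℝ≥0) (E : Set X), Sg t (⋃ s : ℝ≥0, Sg s E) ⊆ ⋃ s : ℝ≥0, Sg s E := by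
    intro t E
    rw [hunion]
    intro y hy
    simp only [Set.mem_iUnion] at hy
    obtain ⟨x, hx, hy⟩ := hy
    obtain ⟨s, hxs⟩ := hx
    have h1 : Sg t {x} ⊆ Sg t (Sg s E) := hmono t _ _ (Set.singleton_subset_iff.2 hxs)
    exact Set.mem_iUnion.2 ⟨t + s, hsemi t s E (h1 hy)⟩
  refine ⟨hsub, ?_⟩
  intro hacc t E _ hγ _
  set γ := ⋃ s : ℝ≥0, Sg s E with hγdef
  obtain ⟨B, hBsub, hBmeas, hBae⟩ := hγ.exists_measurable_subset_ae_eq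
  have h1 : μ γ = μ B := (measure_congr hBae).symm
  have h2 : μ B ≤ μ (Sg t B) := (hacc t B hBmeas).2
  have h3 : Sg t B ⊆ Sg t γ := hmono t _ _ hBsub
  refine le_antisymm (measure_mono (hsub t E)) ?_
  calc μ γ = μ B := h1
    _ ≤ μ (Sg t B) := h2
    _ ≤ μ (Sg t γ) := measure_mono h3
end

section
/- Let X be a Hausdorff topological space, μ an inner regular Borel probability measure on X, and {Σ_t}_{t≥0} a monotone sub-semigroup family of set maps on X which commutes with arbitrary unions, with respect to which μ is accretive. Let K ⊆ X be a compact set and T₀ ≥ 0 such that Σ_t(K) ∩ K = ∅ for every t ≥ T₀, and assume that the orbit γ(K) = ⋃_{s≥0} Σ_s(K) and the set Σ_{T₀}(γ(K)) are μ-measurable. Then μ(K) = 0. -/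
open MeasureTheory Filter Topology
open scoped NNReal

/-!
Put `Γ = K ∪ γ(K)`. By the semigroup property `Σ_{T₀}(Γ) ⊆ ⋃_{s} Σ_{T₀+s}(K)`, and
`Σ_{T₀+s}(K)` never meets `K`, so `Σ_{T₀}(Γ) ⊆ Γ \ K`. Accretivity gives
`μ(Γ) ≤ μ(Σ_{T₀}(Γ)) ≤ μ(Γ \ K) = μ(Γ) - μ(K)`, and `μ(Γ)` is finite.
-/

section SetMap

variable {X : Type*} {F : Set X → Set X}

lemma map_iUnion_of_map_eq_biUnion {ι : Sort*} (hF : ∀ A, F A = ⋃ x ∈ A, F {x})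
    (A : ι → Set X) : F (⋃ i, A i) = ⋃ i, F (A i) := by
  rw [hF, Set.biUnion_iUnion]
  simp only [← hF]

lemma map_union_of_map_eq_biUnion (hF : ∀ A, F A = ⋃ x ∈ A, F {x}) (A B : Set X) :
    F (A ∪ B) = F A ∪ F B := by
  rw [hF, Set.biUnion_union, ← hF, ← hF]

lemma map_union_iUnion_subset {Sg : ℝ≥0 → Set X → Set X}
    (hsemi : ∀ t s A, Sg t (Sg s A) ⊆ Sg (t + s) A)
    (hunion : ∀ t A, Sg t A = ⋃ x ∈ A, Sg t {x}) (t : ℝ≥0) (K : Set X) :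
    Sg t (K ∪ ⋃ s, Sg s K) ⊆ ⋃ s, Sg (t + s) K := by
  rw [map_union_of_map_eq_biUnion (hunion t), map_iUnion_of_map_eq_biUnion (hunion t)]
  refine Set.union_subset ?_ (Set.iUnion_mono fun s => hsemi t s K)
  exact Set.subset_iUnion_of_subset 0 (by rw [add_zero])

lemma iUnion_map_add_subset_diff {Sg : ℝ≥0 → Set X → Set X} {K : Set X} {T₀ : ℝ≥0}
    (hdisj : ∀ t, T₀ ≤ t → Sg t K ∩ K = ∅) :
    ⋃ s, Sg (T₀ + s) K ⊆ (⋃ s, Sg s K) \ K :=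
  Set.iUnion_subset fun _ _ hx =>
    ⟨Set.mem_iUnion_of_mem _ hx, fun hxK => (hdisj _ le_self_add).subset ⟨hx, hxK⟩⟩

end SetMap

section Measure

variable {X : Type*} [MeasurableSpace X] {μ : Measure X}

lemma measure_le_measure_map_of_nullMeasurableSet {F : Set X → Set X}
    (hmono : ∀ A B, A ⊆ B → F A ⊆ F B) (haccr : ∀ B, MeasurableSet B → μ B ≤ μ (F B))
    {A : Set X} (hA : NullMeasurableSet A μ) : μ A ≤ μ (F A) := by
  obtain ⟨B, hBA, hB, hBae⟩ := hA.exists_measurable_subset_ae_eq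
  calc μ A = μ B := (measure_congr hBae).symm
    _ ≤ μ (F B) := haccr B hB
    _ ≤ μ (F A) := measure_mono (hmono _ _ hBA)

lemma measure_eq_zero_of_measure_le_measure_diff [IsFiniteMeasure μ] {s K : Set X}
    (hK : MeasurableSet K) (hKs : K ⊆ s) (h : μ s ≤ μ (s \ K)) : μ K = 0 := by
  have hsplit : μ K + μ (s \ K) = μ s := by
    rw [← measure_inter_add_sdiff s hK, Set.inter_eq_right.2 hKs]
  have : μ K + μ (s \ K) ≤ 0 + μ (s \ K) := by rw [hsplit, zero_add]; exact h
  exact nonpos_iff_eq_zero.1 ((ENNReal.add_le_add_iff_right (measure_ne_top μ _)).1 this)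

end Measure

theorem measure_eq_zero_of_nonreturning_compact_general
    {X : Type*} [TopologicalSpace X] [T2Space X] [MeasurableSpace X] [BorelSpace X]
    (μ : Measure X) [IsProbabilityMeasure μ]
    (Sg : ℝ≥0 → Set X → Set X)
    (hmono : ∀ (t : ℝ≥0) (A B : Set X), A ⊆ B → Sg t A ⊆ Sg t B)
    (hsemi : ∀ (t s : ℝ≥0) (A : Set X), Sg t (Sg s A) ⊆ Sg (t + s) A)
    (hunion : ∀ (t : ℝ≥0) (A : Set X), Sg t A = ⋃ x ∈ A, Sg t {x})
    (haccr : ∀ (t : ℝ≥0) (B : Set X), MeasurableSet B →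
      NullMeasurableSet (Sg t B) μ ∧ μ B ≤ μ (Sg t B))
    (K : Set X) (hK : IsCompact K)
    (T₀ : ℝ≥0)
    (hdisj : ∀ t : ℝ≥0, T₀ ≤ t → Sg t K ∩ K = ∅)
    (horbit : NullMeasurableSet (⋃ s : ℝ≥0, Sg s K) μ) :
    μ K = 0 := by
  have hKm : MeasurableSet K := hK.isClosed.measurableSet
  refine measure_eq_zero_of_measure_le_measure_diff hKm
    (Set.subset_union_left (t := ⋃ s, Sg s K)) ?_
  calc μ (K ∪ ⋃ s, Sg s K)
      ≤ μ (Sg T₀ (K ∪ ⋃ s, Sg s K)) :=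
        measure_le_measure_map_of_nullMeasurableSet (hmono T₀) (fun B hB => (haccr T₀ B hB).2)
          (hKm.nullMeasurableSet.union horbit)
    _ ≤ μ ((K ∪ ⋃ s, Sg s K) \ K) :=
        measure_mono <| (map_union_iUnion_subset hsemi hunion T₀ K).trans <|
          (iUnion_map_add_subset_diff hdisj).trans (Set.sdiff_subset_sdiff_left Set.subset_union_right)

/-- Core of the Poincaré-type recurrence for accretive measures: if `μ` is an
inner regular Borel probability measure on a Hausdorff space, accretive with
respect to a monotone sub-semigroup family of set maps commuting with unions,
and `K` is a compact set such that `Sg t K ∩ K = ∅` for all `t ≥ T₀`, with the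
orbit `γ(K)` and `Sg T₀ (γ(K))` both `μ`-measurable, then `μ K = 0`. -/
theorem measure_eq_zero_of_nonreturning_compact
    {X : Type*} [TopologicalSpace X] [T2Space X] [MeasurableSpace X] [BorelSpace X]
    (μ : Measure X) [IsProbabilityMeasure μ] [μ.InnerRegular]
    (Sg : ℝ≥0 → Set X → Set X)
    (hmono : ∀ (t : ℝ≥0) (A B : Set X), A ⊆ B → Sg t A ⊆ Sg t B)
    (hsemi : ∀ (t s : ℝ≥0) (A : Set X), Sg t (Sg s A) ⊆ Sg (t + s) A)
    (hunion : ∀ (t : ℝ≥0) (A : Set X), Sg t A = ⋃ x ∈ A, Sg t {x})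
    (haccr : ∀ (t : ℝ≥0) (B : Set X), MeasurableSet B →
      NullMeasurableSet (Sg t B) μ ∧ μ B ≤ μ (Sg t B))
    (K : Set X) (hK : IsCompact K)
    (T₀ : ℝ≥0)
    (hdisj : ∀ t : ℝ≥0, T₀ ≤ t → Sg t K ∩ K = ∅)
    (horbit : NullMeasurableSet (⋃ s : ℝ≥0, Sg s K) μ)
    (hSgorbit : NullMeasurableSet (Sg T₀ (⋃ s : ℝ≥0, Sg s K)) μ) :
    μ K = 0 :=
  measure_eq_zero_of_nonreturning_compact_general μ Sg hmono hsemi hunion haccr K hK T₀ hdisj horbit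
end

section
/- Let (X, 𝔐, ρ) be a probability space, {S(t)}_{t≥0} a measurable measure-preserving semigroup on it, (Y, 𝔑) a measurable space, and Π : X → Y a measurable surjective map. Let E ∈ 𝔑. Then there exists a set 𝒩 ∈ 𝔐 with 𝒩 ⊆ Π⁻¹(E) and ρ(𝒩) = 0 such that: (i) every x ∈ Π⁻¹(E) ∖ 𝒩 admits a sequence of nonnegative times t_n → ∞ with Π(S(t_n)x) ∈ E for all n; (ii) setting N = E ∖ Π(Π⁻¹(E) ∖ 𝒩), one has Π⁻¹(N) ⊆ 𝒩, and every y ∈ E ∖ N has a preimage x ∈ Π⁻¹({y}) admitting a sequence of nonnegative times t_n → ∞ with Π(S(t_n)x) ∈ E for all n. -/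
open MeasureTheory Filter Topology

/-- Recurrence in the phase space for projections of invariant measures: given
a measurable measure-preserving semigroup `{S t}_{t ≥ 0}` on a probability
space `(X, ρ)`, a measurable surjection `P : X → Y`, and a measurable set
`E ⊆ Y`, there is a null set `N' ⊆ P⁻¹(E)` such that every point of
`P⁻¹(E) \ N'` projects into `E` along a sequence of times tending to infinity,
and setting `N = E \ P(P⁻¹(E) \ N')` one has `P⁻¹(N) ⊆ N'` and every
`y ∈ E \ N` has a preimage with the same recurrence property. -/
theorem recurrence_of_projected_invariant_measure
    {X Y : Type*} [MeasurableSpace X] [MeasurableSpace Y]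
    (ρ : Measure X) [IsProbabilityMeasure ρ]
    (S : ℝ → X → X)
    (hS0 : S 0 = id)
    (hSadd : ∀ t s : ℝ, 0 ≤ t → 0 ≤ s → S (t + s) = S t ∘ S s)
    (hSmeas : ∀ t : ℝ, 0 ≤ t → ∀ E : Set X, MeasurableSet E → MeasurableSet (S t ⁻¹' E))
    (hSinv : ∀ t : ℝ, 0 ≤ t → ∀ E : Set X, MeasurableSet E → ρ (S t ⁻¹' E) = ρ E)
    (P : X → Y) (hPmeas : Measurable P) (hPsurj : Function.Surjective P)
    (E : Set Y) (hE : MeasurableSet E) :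
    ∃ N' : Set X, MeasurableSet N' ∧ N' ⊆ P ⁻¹' E ∧ ρ N' = 0 ∧
      (∀ x ∈ P ⁻¹' E \ N', ∃ t : ℕ → ℝ, (∀ n, 0 ≤ t n) ∧
        Tendsto t atTop atTop ∧ ∀ n, P (S (t n) x) ∈ E) ∧
      (P ⁻¹' (E \ P '' (P ⁻¹' E \ N')) ⊆ N') ∧
      (∀ y ∈ E \ (E \ P '' (P ⁻¹' E \ N')), ∃ x : X, P x = y ∧
        ∃ t : ℕ → ℝ, (∀ n, 0 ≤ t n) ∧
          Tendsto t atTop atTop ∧ ∀ n, P (S (t n) x) ∈ E) := by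
  set T : X → X := S 1 with hT
  have hTmeas : Measurable T := fun s hs => hSmeas 1 zero_le_one s hs
  have hTmp : MeasurePreserving T ρ ρ := by
    refine ⟨hTmeas, Measure.ext fun s hs => ?_⟩
    rw [Measure.map_apply hTmeas hs]
    exact hSinv 1 zero_le_one s hs
  have hiter : ∀ (n : ℕ) (x : X), S (n : ℝ) x = T^[n] x := by
    intro n
    induction n with
    | zero => intro x; simp [hS0]
    | succ n ih =>
        intro x
        have h1 : ((n + 1 : ℕ) : ℝ) = 1 + (n : ℝ) := by push_cast; ring
        rw [h1, hSadd 1 n zero_le_one (Nat.cast_nonneg n)]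
        simp only [Function.comp_apply, Function.iterate_succ_apply']
        rw [ih x]
  set A : Set X := P ⁻¹' E with hA
  have hAmeas : MeasurableSet A := hPmeas hE
  have hcons := hTmp.conservative.ae_mem_imp_frequently_image_mem hAmeas.nullMeasurableSet
  set N' : Set X := A ∩ {x | ¬ ∃ᶠ n in atTop, T^[n] x ∈ A} with hN'
  have hFmeas : MeasurableSet {x | ∃ᶠ n in atTop, T^[n] x ∈ A} := by
    have : {x | ∃ᶠ n in atTop, T^[n] x ∈ A} = ⋂ N, ⋃ n, ⋃ _ : N ≤ n, T^[n] ⁻¹' A := by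
      ext x
      simp [frequently_atTop, Set.mem_iInter, Set.mem_iUnion]
    rw [this]
    exact MeasurableSet.iInter fun N => MeasurableSet.iUnion fun n =>
      MeasurableSet.iUnion fun _ => hTmeas.iterate n hAmeas
  have hN'meas : MeasurableSet N' := hAmeas.inter hFmeas.compl
  have hN'null : ρ N' = 0 := by
    refine measure_mono_null (fun x hx => ?_) (ae_iff.1 hcons)
    exact fun h => hx.2 (h hx.1)
  have key : ∀ x ∈ A \ N', ∃ t : ℕ → ℝ, (∀ n, 0 ≤ t n) ∧
      Tendsto t atTop atTop ∧ ∀ n, P (S (t n) x) ∈ E := by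
    intro x hx
    have hfreq : ∃ᶠ n in atTop, T^[n] x ∈ A := by
      by_contra h
      exact hx.2 ⟨hx.1, h⟩
    obtain ⟨φ, hφmono, hφ⟩ := extraction_of_frequently_atTop hfreq
    refine ⟨fun n => (φ n : ℝ), fun n => Nat.cast_nonneg _, ?_, fun n => ?_⟩
    · exact tendsto_natCast_atTop_atTop.comp hφmono.tendsto_atTop
    · show S (φ n : ℝ) x ∈ A
      rw [hiter (φ n) x]
      exact hφ n
  refine ⟨N', hN'meas, fun x hx => hx.1, hN'null, key, ?_, ?_⟩
  · intro x hx
    rcases hx with ⟨hxE, hximg⟩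
    by_contra hxn
    exact hximg ⟨x, ⟨hxE, hxn⟩, rfl⟩
  · rintro y ⟨hyE, hy⟩
    have : y ∈ P '' (A \ N') := by
      by_contra h
      exact hy ⟨hyE, h⟩
    obtain ⟨x, hxA, rfl⟩ := this
    exact ⟨x, rfl, key x hxA⟩
end

section
/- Let ν > 0 and c₂ > 0 be real numbers and set c₃ = 2/3 + c₂^{1/3}. Let α < β be real numbers, let y : [α,β] → ℝ be continuously differentiable with y(t) > 0 for all t ∈ [α,β], and let g : [α,β] → ℝ be continuous and nonnegative. Assume that y′(t) + ν·g(t) ≤ (c₂/ν³)·y(t)³ for all t ∈ [α,β]. Then ∫_α^β g(s)^{1/3} ds ≤ ν^{5/3}/(3·y(β)) + (c₃/ν^{4/3})·∫_α^β y(s) ds. -/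
open MeasureTheory intervalIntegral Set

/-- The real-variable inequality behind the `L^{2/3}_loc(I; D(A))` estimate for
Leray–Hopf weak solutions: if `y` is continuously differentiable and positive
on `[α,β]`, `g` is continuous and nonnegative on `[α,β]`, and
`y' + ν·g ≤ (c₂/ν³)·y³` on `[α,β]`, then
`∫_α^β g^{1/3} ≤ ν^{5/3}/(3 y(β)) + (c₃/ν^{4/3}) ∫_α^β y`,
where `c₃ = 2/3 + c₂^{1/3}`. -/
theorem integral_cbrt_le_of_enstrophy_type_inequality
    (ν c₂ c₃ : ℝ) (hν : 0 < ν) (hc₂ : 0 < c₂)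
    (hc₃ : c₃ = 2 / 3 + c₂ ^ ((1 : ℝ) / 3))
    (α β : ℝ) (hαβ : α < β)
    (y y' g : ℝ → ℝ)
    (hy : ∀ t ∈ Icc α β, HasDerivWithinAt y (y' t) (Icc α β) t)
    (hy' : ContinuousOn y' (Icc α β))
    (hypos : ∀ t ∈ Icc α β, 0 < y t)
    (hg : ContinuousOn g (Icc α β))
    (hgnn : ∀ t ∈ Icc α β, 0 ≤ g t)
    (hineq : ∀ t ∈ Icc α β, y' t + ν * g t ≤ (c₂ / ν ^ 3) * (y t) ^ 3) :
    ∫ s in α..β, (g s) ^ ((1 : ℝ) / 3)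
      ≤ ν ^ ((5 : ℝ) / 3) / (3 * y β) + (c₃ / ν ^ ((4 : ℝ) / 3)) * ∫ s in α..β, y s := by
  -- cube roots
  set A := ν ^ ((1 : ℝ) / 3) with hAdef
  have hA0 : 0 < A := Real.rpow_pos_of_pos hν _
  have hA3 : A ^ (3 : ℕ) = ν := by
    rw [hAdef, ← Real.rpow_natCast (ν ^ ((1:ℝ)/3)) 3, ← Real.rpow_mul hν.le]
    norm_num
  have hA4 : ν ^ ((4 : ℝ) / 3) = A ^ (4 : ℕ) := by
    rw [hAdef, ← Real.rpow_natCast (ν ^ ((1:ℝ)/3)) 4, ← Real.rpow_mul hν.le]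
    norm_num
  have hA5 : ν ^ ((5 : ℝ) / 3) = A ^ (5 : ℕ) := by
    rw [hAdef, ← Real.rpow_natCast (ν ^ ((1:ℝ)/3)) 5, ← Real.rpow_mul hν.le]
    norm_num
  set M := c₂ ^ ((1 : ℝ) / 3) with hMdef
  have hM0 : 0 < M := Real.rpow_pos_of_pos hc₂ _
  have hM3 : M ^ (3 : ℕ) = c₂ := by
    rw [hMdef, ← Real.rpow_natCast (c₂ ^ ((1:ℝ)/3)) 3, ← Real.rpow_mul hc₂.le]
    norm_num
  set L := max 1 M with hLdef
  have hL1 : (1 : ℝ) ≤ L := le_max_left _ _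
  have hL0 : (0 : ℝ) < L := lt_of_lt_of_le one_pos hL1
  -- the key scalar inequality
  have hkey : M ^ 3 / (3 * L ^ 2) + 2 * L / 3 ≤ 2 / 3 + M := by
    rcases le_total M 1 with h | h
    · rw [hLdef, max_eq_left h]
      nlinarith [hM0.le, sq_nonneg (1 - M), sq_nonneg M]
    · rw [hLdef, max_eq_right h]
      have : M ^ 3 / (3 * M ^ 2) = M / 3 := by
        field_simp
      rw [this]; linarith
  set c : ℝ := (M ^ 3 / (3 * L ^ 2) + 2 * L / 3) / A ^ 4 with hcdef
  set d : ℝ := A ^ 5 / (3 * L ^ 2) with hddef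
  have hd0 : 0 < d := by positivity
  clear_value A M L c d
  -- pointwise estimate
  have hpoint : ∀ t ∈ Icc α β,
      (g t) ^ ((1 : ℝ) / 3) ≤ c * y t + d * (-(y' t) / (y t) ^ 2) := by
    intro t ht
    have hyt : 0 < y t := hypos t ht
    have hgt : 0 ≤ g t := hgnn t ht
    -- AM-GM step
    have amgm : (g t) ^ ((1 : ℝ) / 3)
        ≤ (1/3) * (A ^ 8 * g t / (L ^ 2 * (y t) ^ 2)) + (2/3) * (L * y t / A ^ 4) := by
      have ha : (0:ℝ) ≤ A ^ 8 * g t / (L ^ 2 * (y t) ^ 2) := by positivity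
      have hb : (0:ℝ) ≤ L * y t / A ^ 4 := by positivity
      have h2 := Real.geom_mean_le_arith_mean2_weighted (by norm_num : (0:ℝ) ≤ 1/3)
        (by norm_num : (0:ℝ) ≤ 2/3) ha hb (by norm_num)
      have heq : (A ^ 8 * g t / (L ^ 2 * (y t) ^ 2)) ^ ((1:ℝ)/3)
          * (L * y t / A ^ 4) ^ ((2:ℝ)/3) = (g t) ^ ((1 : ℝ) / 3) := by
        have h23 : (L * y t / A ^ 4) ^ ((2:ℝ)/3)
            = ((L * y t / A ^ 4) ^ (2:ℕ)) ^ ((1:ℝ)/3) := by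
          rw [← Real.rpow_natCast (L * y t / A ^ 4) 2, ← Real.rpow_mul hb]
          norm_num
        rw [h23, ← Real.mul_rpow ha (by positivity)]
        congr 1
        field_simp
      rw [heq] at h2
      exact h2
    -- differential inequality step
    have h1 : y' t + A ^ 3 * g t ≤ M ^ 3 / A ^ 9 * (y t) ^ 3 := by
      have := hineq t ht
      rw [← hA3, ← hM3] at this
      calc y' t + A ^ 3 * g t ≤ M ^ 3 / (A ^ 3) ^ 3 * (y t) ^ 3 := this
        _ = M ^ 3 / A ^ 9 * (y t) ^ 3 := by ring_nf
    have h2 : (1/3) * (A ^ 8 * g t / (L ^ 2 * (y t) ^ 2))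
        ≤ M ^ 3 / (3 * L ^ 2 * A ^ 4) * y t + d * (-(y' t) / (y t) ^ 2) := by
      have hfac : (0:ℝ) ≤ A ^ 5 / (3 * L ^ 2 * (y t) ^ 2) := by positivity
      have hprod : 0 ≤ (M ^ 3 / A ^ 9 * (y t) ^ 3 - y' t - A ^ 3 * g t)
          * (A ^ 5 / (3 * L ^ 2 * (y t) ^ 2)) :=
        mul_nonneg (by linarith) hfac
      have expand : M ^ 3 / (3 * L ^ 2 * A ^ 4) * y t + d * (-(y' t) / (y t) ^ 2)
          - (1/3) * (A ^ 8 * g t / (L ^ 2 * (y t) ^ 2))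
          = (M ^ 3 / A ^ 9 * (y t) ^ 3 - y' t - A ^ 3 * g t)
            * (A ^ 5 / (3 * L ^ 2 * (y t) ^ 2)) := by
        rw [hddef]
        field_simp
        ring
      linarith [expand ▸ hprod]
    have hc_expand : c * y t = M ^ 3 / (3 * L ^ 2 * A ^ 4) * y t + (2/3) * (L * y t / A ^ 4) := by
      rw [hcdef]
      field_simp
    rw [hc_expand]
    linarith
  -- continuity facts
  have hyc : ContinuousOn y (Icc α β) := fun t ht => (hy t ht).continuousWithinAt
  have hyne : ∀ t ∈ Icc α β, y t ≠ 0 := fun t ht => (hypos t ht).ne'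
  have huIcc : uIcc α β = Icc α β := uIcc_of_le hαβ.le
  have hgi : IntervalIntegrable (fun s => (g s) ^ ((1:ℝ)/3)) volume α β := by
    apply ContinuousOn.intervalIntegrable
    rw [huIcc]
    exact hg.rpow_const (fun t ht => Or.inr (by norm_num))
  have hder_cont : ContinuousOn (fun s => -(y' s) / (y s) ^ 2) (Icc α β) :=
    (hy'.neg).div (hyc.pow 2) (fun t ht => pow_ne_zero 2 (hyne t ht))
  have hderi : IntervalIntegrable (fun s => -(y' s) / (y s) ^ 2) volume α β := by
    apply ContinuousOn.intervalIntegrable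
    rwa [huIcc]
  have hyi : IntervalIntegrable y volume α β := by
    apply ContinuousOn.intervalIntegrable
    rwa [huIcc]
  have hrhsint : IntervalIntegrable (fun s => c * y s + d * (-(y' s) / (y s) ^ 2)) volume α β :=
    (hyi.const_mul c).add (hderi.const_mul d)
  -- integrate the pointwise bound
  have hmono : ∫ s in α..β, (g s) ^ ((1:ℝ)/3)
      ≤ ∫ s in α..β, (c * y s + d * (-(y' s) / (y s) ^ 2)) :=
    intervalIntegral.integral_mono_on hαβ.le hgi hrhsint hpoint
  -- FTC for the 1/y part
  have hftc : ∫ s in α..β, -(y' s) / (y s) ^ 2 = (y β)⁻¹ - (y α)⁻¹ := by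
    apply intervalIntegral.integral_eq_sub_of_hasDeriv_right_of_le hαβ.le
    · exact hyc.inv₀ hyne
    · intro x hx
      have hxm : x ∈ Icc α β := Ioo_subset_Icc_self hx
      have hmem : Icc α β ∈ nhds x := Icc_mem_nhds hx.1 hx.2
      have : HasDerivAt y (y' x) x := (hy x hxm).hasDerivAt hmem
      exact (this.inv (hyne x hxm)).hasDerivWithinAt
    · exact hderi
  have hsplit : ∫ s in α..β, (c * y s + d * (-(y' s) / (y s) ^ 2))
      = c * (∫ s in α..β, y s) + d * ((y β)⁻¹ - (y α)⁻¹) := by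
    rw [intervalIntegral.integral_add (hyi.const_mul c) (hderi.const_mul d),
      intervalIntegral.integral_const_mul, intervalIntegral.integral_const_mul, hftc]
  -- final bounds
  have hyβ : 0 < y β := hypos β ⟨hαβ.le, le_rfl⟩
  have hyα : 0 < y α := hypos α ⟨le_rfl, hαβ.le⟩
  have hbd1 : d * ((y β)⁻¹ - (y α)⁻¹) ≤ ν ^ ((5:ℝ)/3) / (3 * y β) := by
    have h1 : d * ((y β)⁻¹ - (y α)⁻¹) ≤ d * (y β)⁻¹ := by
      apply mul_le_mul_of_nonneg_left _ hd0.le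
      have : 0 < (y α)⁻¹ := inv_pos.2 hyα
      linarith
    have h2 : d * (y β)⁻¹ ≤ (A ^ 5 / 3) * (y β)⁻¹ := by
      apply mul_le_mul_of_nonneg_right _ (inv_pos.2 hyβ).le
      rw [hddef]
      have h3L : (3:ℝ) ≤ 3 * L ^ 2 := by nlinarith [hL1]
      exact div_le_div_of_nonneg_left (by positivity) (by norm_num) h3L
    have h3 : (A ^ 5 / 3) * (y β)⁻¹ = ν ^ ((5:ℝ)/3) / (3 * y β) := by
      rw [hA5]; field_simp
    linarith
  have hintynn : 0 ≤ ∫ s in α..β, y s :=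
    intervalIntegral.integral_nonneg hαβ.le (fun u hu => (hypos u hu).le)
  have hbd2 : c * (∫ s in α..β, y s) ≤ (c₃ / ν ^ ((4:ℝ)/3)) * (∫ s in α..β, y s) := by
    apply mul_le_mul_of_nonneg_right _ hintynn
    rw [hcdef, hA4, hc₃]
    gcongr
  calc ∫ s in α..β, (g s) ^ ((1:ℝ)/3)
      ≤ c * (∫ s in α..β, y s) + d * ((y β)⁻¹ - (y α)⁻¹) := hmono.trans_eq hsplit
    _ ≤ ν ^ ((5:ℝ)/3) / (3 * y β) + (c₃ / ν ^ ((4:ℝ)/3)) * (∫ s in α..β, y s) := by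
        linarith
end

section
/- Let LIM be a generalized limit, h ∈ C_b([0,∞);ℝ), and t > 0. Define A_h : [0,∞) → ℝ by A_h(0) = h(0) and A_h(T) = (1/T)∫_0^T h(τ) dτ for T > 0, and define A_h^t : [0,∞) → ℝ by A_h^t(0) = h(t) and A_h^t(T) = (1/T)∫_0^T h(τ + t) dτ for T > 0. Then A_h and A_h^t are bounded and continuous on [0,∞), and LIM(A_h) = LIM(A_h^t). -/
open Filter Topology intervalIntegral
open scoped NNReal

noncomputable def cesaroAvg (g : ℝ → ℝ) : ℝ → ℝ :=
  fun T => if T = 0 then g 0 else T⁻¹ * ∫ τ in (0 : ℝ)..T, g τ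

lemma cesaroAvg_continuous (g : ℝ → ℝ) (hg : Continuous g) :
    Continuous (cesaroAvg g) := by
  have hint : ∀ a b : ℝ, IntervalIntegrable g MeasureTheory.volume a b :=
    fun a b => hg.intervalIntegrable a b
  have hF : Continuous fun T : ℝ => ∫ τ in (0:ℝ)..T, g τ :=
    intervalIntegral.continuous_primitive (fun a b => hint a b) 0
  rw [continuous_iff_continuousAt]
  intro x
  by_cases hx : x = 0
  · subst hx
    have hderiv : HasDerivAt (fun T : ℝ => ∫ τ in (0:ℝ)..T, g τ) (g 0) 0 :=
      intervalIntegral.integral_hasDerivAt_right (hint 0 0)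
        (hg.stronglyMeasurableAtFilter _ _) hg.continuousAt
    have hslope := hasDerivAt_iff_tendsto_slope.mp hderiv
    have heq : ∀ T : ℝ, T ≠ 0 → slope (fun T : ℝ => ∫ τ in (0:ℝ)..T, g τ) 0 T
        = cesaroAvg g T := by
      intro T hT
      simp [slope, cesaroAvg, hT, div_eq_inv_mul]
    have h1 : Tendsto (cesaroAvg g) (𝓝[≠] (0:ℝ)) (𝓝 (g 0)) := by
      refine hslope.congr' ?_
      filter_upwards [self_mem_nhdsWithin] with T hT
      exact heq T hT
    have h2 : Tendsto (cesaroAvg g) (pure (0:ℝ)) (𝓝 (g 0)) := by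
      have : cesaroAvg g 0 = g 0 := by simp [cesaroAvg]
      simpa [this] using tendsto_pure_nhds (cesaroAvg g) 0
    have : Tendsto (cesaroAvg g) (𝓝[≠] (0:ℝ) ⊔ pure 0) (𝓝 (g 0)) :=
      Tendsto.sup h1 h2
    rw [nhdsNE_sup_pure] at this
    simpa [ContinuousAt, cesaroAvg] using this
  · have hcont : ContinuousAt (fun T : ℝ => T⁻¹ * ∫ τ in (0:ℝ)..T, g τ) x :=
      ((continuousAt_inv₀ hx).mul hF.continuousAt)
    refine hcont.congr ?_
    filter_upwards [isOpen_ne.mem_nhds hx] with T hT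
    simp [cesaroAvg, hT]

lemma cesaroAvg_bound (g : ℝ → ℝ) (C : ℝ)
    (hC : ∀ x, ‖g x‖ ≤ C) : ∀ T, ‖cesaroAvg g T‖ ≤ C := by
  intro T
  by_cases hT : T = 0
  · simpa [cesaroAvg, hT] using hC 0
  · have hInt : ‖∫ τ in (0:ℝ)..T, g τ‖ ≤ C * |T - 0| :=
      intervalIntegral.norm_integral_le_of_norm_le_const fun x _ => hC x
    have : ‖cesaroAvg g T‖ = |T|⁻¹ * ‖∫ τ in (0:ℝ)..T, g τ‖ := by
      simp [cesaroAvg, hT, abs_mul]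
    rw [this]
    have hTpos : (0:ℝ) < |T| := abs_pos.mpr hT
    calc |T|⁻¹ * ‖∫ τ in (0:ℝ)..T, g τ‖ ≤ |T|⁻¹ * (C * |T|) := by
          apply mul_le_mul_of_nonneg_left _ (inv_nonneg.mpr hTpos.le)
          simpa using hInt
      _ = C := by field_simp


/-- Shift-invariance of Cesàro averages under a generalized limit: for a
bounded continuous `h` on `[0,∞)` and `t > 0`, the averages
`A_h(T) = (1/T) ∫_0^T h(τ) dτ` and `A_h^t(T) = (1/T) ∫_0^T h(τ+t) dτ`
(continuously extended at `T = 0` by `h(0)` and `h(t)` respectively) are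
bounded continuous functions with `LIM(A_h) = LIM(A_h^t)`. -/
theorem generalized_limit_cesaro_shift_invariant
    (LIM : BoundedContinuousFunction ℝ≥0 ℝ →ₗ[ℝ] ℝ)
    (hpos : ∀ g : BoundedContinuousFunction ℝ≥0 ℝ, (∀ s, 0 ≤ g s) → 0 ≤ LIM g)
    (hlim : ∀ (g : BoundedContinuousFunction ℝ≥0 ℝ) (a : ℝ),
      Tendsto (fun T => g T) atTop (𝓝 a) → LIM g = a)
    (h : BoundedContinuousFunction ℝ≥0 ℝ) (t : ℝ≥0) (ht : 0 < t) :
    ∃ A At : BoundedContinuousFunction ℝ≥0 ℝ,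
      (∀ T : ℝ≥0, A T = if T = 0 then h 0
        else (T : ℝ)⁻¹ * ∫ τ in (0 : ℝ)..(T : ℝ), h τ.toNNReal) ∧
      (∀ T : ℝ≥0, At T = if T = 0 then h t
        else (T : ℝ)⁻¹ * ∫ τ in (0 : ℝ)..(T : ℝ), h (τ.toNNReal + t)) ∧
      LIM A = LIM At := by
  classical
  set g : ℝ → ℝ := fun τ => h τ.toNNReal with hg_def
  set gt : ℝ → ℝ := fun τ => h (τ.toNNReal + t) with hgt_def
  have hg : Continuous g := h.continuous.comp continuous_real_toNNReal
  have hgt : Continuous gt :=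
    h.continuous.comp (continuous_real_toNNReal.add continuous_const)
  have hgb : ∀ x, ‖g x‖ ≤ ‖h‖ := fun x => h.norm_coe_le_norm _
  have hgtb : ∀ x, ‖gt x‖ ≤ ‖h‖ := fun x => h.norm_coe_le_norm _
  have hint : ∀ a b : ℝ, IntervalIntegrable g MeasureTheory.volume a b :=
    fun a b => hg.intervalIntegrable a b
  refine ⟨BoundedContinuousFunction.ofNormedAddCommGroup
      (fun T : ℝ≥0 => cesaroAvg g T)
      ((cesaroAvg_continuous g hg).comp NNReal.continuous_coe) ‖h‖
      (fun T => cesaroAvg_bound g ‖h‖ hgb _),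
    BoundedContinuousFunction.ofNormedAddCommGroup
      (fun T : ℝ≥0 => cesaroAvg gt T)
      ((cesaroAvg_continuous gt hgt).comp NNReal.continuous_coe) ‖h‖
      (fun T => cesaroAvg_bound gt ‖h‖ hgtb _), ?_, ?_, ?_⟩
  · intro T
    show cesaroAvg g ↑T = _
    by_cases hT : T = 0
    · subst hT; simp [cesaroAvg, hg_def]
    · have hTne : ((T:ℝ)) ≠ 0 := by exact_mod_cast hT
      simp [cesaroAvg, hTne, hT, hg_def]
  · intro T
    show cesaroAvg gt ↑T = _
    by_cases hT : T = 0
    · subst hT; simp [cesaroAvg, hgt_def]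
    · have hTne : ((T:ℝ)) ≠ 0 := by exact_mod_cast hT
      simp [cesaroAvg, hTne, hT, hgt_def]
  · set A := BoundedContinuousFunction.ofNormedAddCommGroup
      (fun T : ℝ≥0 => cesaroAvg g T)
      ((cesaroAvg_continuous g hg).comp NNReal.continuous_coe) ‖h‖
      (fun T => cesaroAvg_bound g ‖h‖ hgb _) with hA_def
    set At := BoundedContinuousFunction.ofNormedAddCommGroup
      (fun T : ℝ≥0 => cesaroAvg gt T)
      ((cesaroAvg_continuous gt hgt).comp NNReal.continuous_coe) ‖h‖
      (fun T => cesaroAvg_bound gt ‖h‖ hgtb _) with hAt_def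
    -- key: the shifted integral
    have hshift : ∀ T : ℝ≥0, (∫ τ in (0:ℝ)..(T:ℝ), gt τ)
        = ∫ τ in (t:ℝ)..((T:ℝ) + t), g τ := by
      intro T
      have h1 : (∫ τ in (0:ℝ)..(T:ℝ), gt τ) = ∫ τ in (0:ℝ)..(T:ℝ), g (τ + t) := by
        apply intervalIntegral.integral_congr
        intro τ hτ
        rw [Set.uIcc_of_le T.coe_nonneg] at hτ
        have hτ0 : (0:ℝ) ≤ τ := hτ.1
        simp only [hgt_def, hg_def]
        congr 1
        rw [Real.toNNReal_add hτ0 t.coe_nonneg, Real.toNNReal_coe]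
      rw [h1, intervalIntegral.integral_comp_add_right, zero_add]
    -- difference formula
    have hbound : ∀ T : ℝ≥0, T ≠ 0 →
        ‖(A - At) T‖ ≤ (2 * ‖h‖ * t) * (T : ℝ)⁻¹ := by
      intro T hT
      have hTne : ((T : ℝ)) ≠ 0 := by exact_mod_cast hT
      have hTpos : (0:ℝ) < T := lt_of_le_of_ne T.coe_nonneg (Ne.symm hTne)
      have hiden : (∫ τ in (0:ℝ)..(T:ℝ), g τ) - (∫ τ in (t:ℝ)..((T:ℝ)+t), g τ)
          = (∫ τ in (0:ℝ)..(t:ℝ), g τ) - ∫ τ in ((T:ℝ))..((T:ℝ)+t), g τ := by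
        have e1 : (∫ τ in (0:ℝ)..(T:ℝ), g τ) + (∫ τ in ((T:ℝ))..((T:ℝ)+t), g τ)
            = ∫ τ in (0:ℝ)..((T:ℝ)+t), g τ :=
          intervalIntegral.integral_add_adjacent_intervals (hint _ _) (hint _ _)
        have e2 : (∫ τ in (0:ℝ)..(t:ℝ), g τ) + (∫ τ in ((t:ℝ))..((T:ℝ)+t), g τ)
            = ∫ τ in (0:ℝ)..((T:ℝ)+t), g τ :=
          intervalIntegral.integral_add_adjacent_intervals (hint _ _) (hint _ _)
        linarith
      have hATval : (A - At) T = (T:ℝ)⁻¹ *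
          ((∫ τ in (0:ℝ)..(t:ℝ), g τ) - ∫ τ in ((T:ℝ))..((T:ℝ)+t), g τ) := by
        have : (A - At) T = cesaroAvg g T - cesaroAvg gt T := by
          rw [BoundedContinuousFunction.sub_apply]; rfl
        rw [this]
        unfold cesaroAvg
        rw [if_neg hTne, if_neg hTne, hshift T, ← mul_sub, hiden]
      rw [hATval]
      have hb1 : ‖∫ τ in (0:ℝ)..(t:ℝ), g τ‖ ≤ ‖h‖ * |(t:ℝ) - 0| :=
        intervalIntegral.norm_integral_le_of_norm_le_const fun x _ => hgb x
      have hb2 : ‖∫ τ in ((T:ℝ))..((T:ℝ)+t), g τ‖ ≤ ‖h‖ * |(T:ℝ) + t - T| :=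
        intervalIntegral.norm_integral_le_of_norm_le_const fun x _ => hgb x
      have habs : |(t:ℝ) - 0| = (t:ℝ) := by simp [abs_of_nonneg t.coe_nonneg]
      have habs2 : |(T:ℝ) + t - T| = (t:ℝ) := by
        rw [add_sub_cancel_left, abs_of_nonneg t.coe_nonneg]
      rw [habs] at hb1; rw [habs2] at hb2
      rw [norm_mul, norm_inv, Real.norm_eq_abs, abs_of_pos hTpos,
        mul_comm (2 * ‖h‖ * (t:ℝ)) ((T:ℝ))⁻¹]
      apply mul_le_mul_of_nonneg_left _ (inv_nonneg.mpr hTpos.le)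
      calc ‖(∫ τ in (0:ℝ)..(t:ℝ), g τ) - ∫ τ in ((T:ℝ))..((T:ℝ)+t), g τ‖
          ≤ ‖∫ τ in (0:ℝ)..(t:ℝ), g τ‖ + ‖∫ τ in ((T:ℝ))..((T:ℝ)+t), g τ‖ :=
            norm_sub_le _ _
        _ ≤ ‖h‖ * t + ‖h‖ * t := add_le_add hb1 hb2
        _ = 2 * ‖h‖ * t := by ring
    have htends : Tendsto (fun T : ℝ≥0 => (A - At) T) atTop (𝓝 0) := by
      refine squeeze_zero_norm' (a := fun T : ℝ≥0 => (2 * ‖h‖ * t) * (T : ℝ)⁻¹) ?_ ?_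
      · filter_upwards [eventually_ne_atTop (0 : ℝ≥0)] with T hT
        exact hbound T hT
      · have h1 : Tendsto (fun T : ℝ≥0 => ((T : ℝ))⁻¹) atTop (𝓝 0) :=
          tendsto_inv_atTop_zero.comp (NNReal.tendsto_coe_atTop.mpr tendsto_id)
        simpa using h1.const_mul (2 * ‖h‖ * t)
    have hz : LIM (A - At) = 0 := hlim _ 0 htends
    rw [map_sub] at hz
    linarith
end

section
/- Let M be a metrizable topological space, I a nonempty subset of ℝ, and K a compact subset of the space C(I, M) of continuous maps from I to M endowed with the compact-open topology. Then the set of real-valued functions on K of the form Φ(u) = φ(u(t₁), …, u(t_n)), where n ∈ ℕ, t₁, …, t_n ∈ I, and φ : Mⁿ → ℝ is continuous and bounded, is dense in the Banach space C(K; ℝ) of continuous real-valued functions on K with the supremum norm. -/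
/-!
Cylindrical functions form a subalgebra of `C(K, ℝ)`: two of them can be read off the values
at a common finite set of times (concatenate the two lists of times), so sums and products are
again cylindrical, and constants are cylindrical with no times at all. Two distinct paths of `K`
differ at some time `t`, and since a metrizable space is completely regular, a bounded continuous
function of `u(t)` separates them. Stone–Weierstrass on the compact space `K` concludes.
-/

open BoundedContinuousFunction

namespace ContinuousMap

variable {X M : Type*} [TopologicalSpace X] [TopologicalSpace M]

def cylindricalFunctions (K : Set C(X, M)) : Set C(K, ℝ) :=
  {Φ | ∃ (n : ℕ) (s : Fin n → X) (φ : (Fin n → M) →ᵇ ℝ),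
    ∀ u : K, Φ u = φ fun i => (u : C(X, M)) (s i)}

variable {K : Set C(X, M)}

theorem exists_common_points_of_mem_cylindricalFunctions {Φ₁ Φ₂ : C(K, ℝ)}
    (h₁ : Φ₁ ∈ cylindricalFunctions K) (h₂ : Φ₂ ∈ cylindricalFunctions K) :
    ∃ (n : ℕ) (s : Fin n → X) (φ₁ φ₂ : (Fin n → M) →ᵇ ℝ), ∀ u : K,
      Φ₁ u = φ₁ (fun i => (u : C(X, M)) (s i)) ∧ Φ₂ u = φ₂ (fun i => (u : C(X, M)) (s i)) := by
  obtain ⟨n₁, s₁, φ₁, hΦ₁⟩ := h₁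
  obtain ⟨n₂, s₂, φ₂, hΦ₂⟩ := h₂
  refine ⟨n₁ + n₂, Fin.append s₁ s₂,
    φ₁.compContinuous ⟨fun v i => v (Fin.castAdd n₂ i), by fun_prop⟩,
    φ₂.compContinuous ⟨fun v i => v (Fin.natAdd n₁ i), by fun_prop⟩, fun u => ?_⟩
  simp [hΦ₁, hΦ₂]

theorem add_mem_cylindricalFunctions {Φ₁ Φ₂ : C(K, ℝ)}
    (h₁ : Φ₁ ∈ cylindricalFunctions K) (h₂ : Φ₂ ∈ cylindricalFunctions K) :
    Φ₁ + Φ₂ ∈ cylindricalFunctions K := by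
  obtain ⟨n, s, φ₁, φ₂, hΦ⟩ := exists_common_points_of_mem_cylindricalFunctions h₁ h₂
  exact ⟨n, s, φ₁ + φ₂, fun u => by simp [(hΦ u).1, (hΦ u).2]⟩

theorem mul_mem_cylindricalFunctions {Φ₁ Φ₂ : C(K, ℝ)}
    (h₁ : Φ₁ ∈ cylindricalFunctions K) (h₂ : Φ₂ ∈ cylindricalFunctions K) :
    Φ₁ * Φ₂ ∈ cylindricalFunctions K := by
  obtain ⟨n, s, φ₁, φ₂, hΦ⟩ := exists_common_points_of_mem_cylindricalFunctions h₁ h₂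
  exact ⟨n, s, φ₁ * φ₂, fun u => by simp [(hΦ u).1, (hΦ u).2]⟩

theorem algebraMap_mem_cylindricalFunctions (c : ℝ) :
    algebraMap ℝ C(K, ℝ) c ∈ cylindricalFunctions K :=
  ⟨0, Fin.elim0, .const _ c, fun _ => rfl⟩

def cylindricalSubalgebra (K : Set C(X, M)) : Subalgebra ℝ C(K, ℝ) where
  carrier := cylindricalFunctions K
  mul_mem' := mul_mem_cylindricalFunctions
  add_mem' := add_mem_cylindricalFunctions
  algebraMap_mem' := algebraMap_mem_cylindricalFunctions

theorem cylindricalSubalgebra_separatesPoints [T35Space M] :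
    (cylindricalSubalgebra K).SeparatesPoints := by
  intro u v huv
  obtain ⟨x, hx⟩ : ∃ x, (u : C(X, M)) x ≠ (v : C(X, M)) x := by
    simpa [ContinuousMap.ext_iff] using Subtype.coe_ne_coe.mpr huv
  obtain ⟨g, hg, hgx⟩ := separatesPoints_continuous_of_t35Space_Icc hx
  let φ : (Fin 1 → M) →ᵇ ℝ := (mkOfCompact ⟨((↑) : unitInterval → ℝ), continuous_subtype_val⟩)
    |>.compContinuous ⟨fun v => g (v 0), hg.comp (continuous_apply 0)⟩
  let Φ : C(K, ℝ) := ⟨fun w => φ fun _ => (w : C(X, M)) x, by fun_prop⟩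
  refine ⟨Φ, ⟨Φ, ⟨1, fun _ => x, φ, fun _ => rfl⟩, rfl⟩, ?_⟩
  simpa [Φ, φ] using Subtype.coe_ne_coe.mpr hgx

theorem dense_cylindricalFunctions [T35Space M] [CompactSpace K] :
    Dense (cylindricalFunctions K) := by
  have h := subalgebra_topologicalClosure_eq_top_of_separatesPoints _
    (cylindricalSubalgebra_separatesPoints (K := K))
  exact dense_iff_closure_eq.mpr (congrArg SetLike.coe h)

end ContinuousMap

theorem cylindrical_functions_dense_general
    {M : Type*} [TopologicalSpace M] [TopologicalSpace.MetrizableSpace M]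
    (I : Set ℝ)
    (K : Set C(I, M)) (hK : IsCompact K) :
    Dense {Φ : C(K, ℝ) |
      ∃ (n : ℕ) (t : Fin n → ℝ) (ht : ∀ i, t i ∈ I) (φ : (Fin n → M) → ℝ),
        Continuous φ ∧ (∃ C : ℝ, ∀ v, |φ v| ≤ C) ∧
        ∀ u : K, Φ u = φ fun i => (u : C(I, M)) ⟨t i, ht i⟩} := by
  have : CompactSpace K := isCompact_iff_compactSpace.mp hK
  have : T35Space M := by
    let := TopologicalSpace.metrizableSpaceMetric M
    infer_instance
  refine ContinuousMap.dense_cylindricalFunctions.mono ?_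
  rintro Φ ⟨n, s, φ, hΦ⟩
  exact ⟨n, fun i => s i, fun i => (s i).2, φ, φ.continuous, ⟨‖φ‖, φ.norm_coe_le_norm⟩, hΦ⟩

/-- Stone–Weierstrass density of cylindrical functions: for a metrizable space
`M`, a nonempty set `I ⊆ ℝ`, and a compact set `K` of continuous paths
`C(I, M)` (compact-open topology), the functions of the form
`Φ(u) = φ(u(t₁), …, u(t_n))` with `t₁, …, t_n ∈ I` and `φ : Mⁿ → ℝ` continuous
and bounded are dense in `C(K, ℝ)` (whose topology, `K` being compact, is that
of the supremum norm). -/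
theorem cylindrical_functions_dense
    {M : Type*} [TopologicalSpace M] [TopologicalSpace.MetrizableSpace M]
    (I : Set ℝ) (hI : I.Nonempty)
    (K : Set C(I, M)) (hK : IsCompact K) :
    Dense {Φ : C(K, ℝ) |
      ∃ (n : ℕ) (t : Fin n → ℝ) (ht : ∀ i, t i ∈ I) (φ : (Fin n → M) → ℝ),
        Continuous φ ∧ (∃ C : ℝ, ∀ v, |φ v| ≤ C) ∧
        ∀ u : K, Φ u = φ fun i => (u : C(I, M)) ⟨t i, ht i⟩} :=
  cylindrical_functions_dense_general I K hK
end
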